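/- arXiv:0806.0539 — 2 statements merged into one kernel-verified Lean document; each statement's English description precedes it below -/
import Mathlib

section
/- For a nonempty subset u ⊆ {1,…,d}, the cumulated ANOVA variance satisfies Γ_u := Σ_{v⊆u} σ_v² = ∫_{ℝ^{2d−|u|}} φ(x) φ(x_u, y_{−u}) p(x) p(y_{−u}) dx dy_{−u} − (∫ φ p)², where (x_u, y_{−u}) denotes the vector with coordinates x_i for i∈u and y_i for i∉u. -/
open MeasureTheory Finset
open scoped ENNReal NNReal

/-- ANOVA component `φ_u` of `φ` w.r.t. the product density `p`, defined
recursively over subsets: `φ_u(x) = ∫ φ(x_u, y_{−u}) p(y) dy − ∑_{v ⊊ u} φ_v(x)`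
(integrating against the full product density, which agrees with integrating
out only the complementary coordinates since each `pᵢ` integrates to one). -/
noncomputable def anova {d : ℕ} (p : Fin d → ℝ → ℝ) (φ : (Fin d → ℝ) → ℝ) :
    Finset (Fin d) → (Fin d → ℝ) → ℝ
  | u => fun x =>
    (∫ y : Fin d → ℝ,
        φ (fun i => if i ∈ u then x i else y i) * ∏ i : Fin d, p i (y i)) -
      ∑ v ∈ u.ssubsets.attach, anova p φ v.1 x
  termination_by u => u.card
  decreasing_by exact Finset.card_lt_card (Finset.mem_ssubsets.mp v.2)

namespace WangFang

variable {d : ℕ}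

/-- The vector with coordinates of `x` on `s` and of `y` off `s`. -/
def mix (s : Finset (Fin d)) (x y : Fin d → ℝ) : Fin d → ℝ :=
  fun i => if i ∈ s then x i else y i

/-- The product probability measure. -/
noncomputable def pm (p : Fin d → ℝ → ℝ) : Measure (Fin d → ℝ) :=
  Measure.pi fun i => MeasureTheory.volume.withDensity fun t => ENNReal.ofReal (p i t)

section mixlemmas

@[simp] lemma mix_empty (x y : Fin d → ℝ) : mix ∅ x y = y := by
  funext i; simp [mix]

lemma mix_assoc (a v : Finset (Fin d)) (x y z : Fin d → ℝ) :
    mix a (mix v x y) z = mix (a ∩ v) x (mix (a \ v) y z) := by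
  funext i
  by_cases hia : i ∈ a <;> by_cases hiv : i ∈ v <;>
    simp [mix, hia, hiv]

lemma mix_mix (a v : Finset (Fin d)) (h : a ⊆ v) (x y z : Fin d → ℝ) :
    mix a (mix v x y) z = mix a x z := by
  rw [mix_assoc, Finset.inter_eq_left.mpr h, Finset.sdiff_eq_empty_iff_subset.mpr h]
  funext i
  by_cases hia : i ∈ a <;> simp [mix, hia]

end mixlemmas

section measure

variable {p : Fin d → ℝ → ℝ}

lemma integrable_p (hpd : ∀ i, ∫ x : ℝ, p i x = 1) (i : Fin d) : Integrable (p i) := by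
  by_contra h
  have := hpd i
  rw [integral_undef h] at this
  exact one_ne_zero this.symm

lemma prob_factor (hp : ∀ i x, 0 ≤ p i x) (hpd : ∀ i, ∫ x : ℝ, p i x = 1) (i : Fin d) :
    IsProbabilityMeasure (volume.withDensity fun t => ENNReal.ofReal (p i t)) := by
  constructor
  rw [withDensity_apply _ MeasurableSet.univ, Measure.restrict_univ,
    ← ofReal_integral_eq_lintegral_ofReal (integrable_p hpd i)
      (Filter.Eventually.of_forall (hp i)), hpd i, ENNReal.ofReal_one]

lemma prob_pm (hp : ∀ i x, 0 ≤ p i x) (hpd : ∀ i, ∫ x : ℝ, p i x = 1) :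
    IsProbabilityMeasure (pm p) := by
  haveI : ∀ i, IsProbabilityMeasure
      (volume.withDensity fun t => ENNReal.ofReal (p i t)) := prob_factor hp hpd
  unfold pm; infer_instance

/-- Tonelli for a finite product of measures on `ℝ`. -/
lemma lintegral_pi_prod {n : ℕ} (lam : Fin n → Measure ℝ) [∀ i, SigmaFinite (lam i)]
    (g : Fin n → ℝ → ℝ≥0∞) (hg : ∀ i, Measurable (g i)) :
    ∫⁻ x : Fin n → ℝ, ∏ i, g i (x i) ∂(Measure.pi lam) = ∏ i, ∫⁻ t, g i t ∂(lam i) := by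
  induction n with
  | zero => simp [lintegral_const, Measure.pi_univ]
  | succ n ih =>
    have hmp := measurePreserving_piFinSuccAbove lam 0
    have hmeas : Measurable fun q : ℝ × (Fin n → ℝ) =>
        g 0 q.1 * ∏ i : Fin n, g ((0 : Fin (n+1)).succAbove i) (q.2 i) := by
      apply Measurable.mul
      · exact (hg 0).comp measurable_fst
      · exact Finset.measurable_prod _ fun i _ =>
          (hg _).comp ((measurable_pi_apply i).comp measurable_snd)
    calc ∫⁻ x : Fin (n+1) → ℝ, ∏ i, g i (x i) ∂(Measure.pi lam)
        = ∫⁻ q : ℝ × (Fin n → ℝ), g 0 q.1 * ∏ i : Fin n,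
            g ((0 : Fin (n+1)).succAbove i) (q.2 i)
            ∂((lam 0).prod (Measure.pi fun i => lam ((0 : Fin (n+1)).succAbove i))) := by
          rw [← hmp.lintegral_comp hmeas]
          congr 1
          funext x
          simp only [Function.comp_apply, MeasurableEquiv.piFinSuccAbove_apply]
          rw [Fin.prod_univ_succAbove (fun i => g i (x i)) 0]
          rfl
      _ = (∫⁻ t, g 0 t ∂(lam 0)) * ∫⁻ y : Fin n → ℝ, ∏ i : Fin n,
            g ((0 : Fin (n+1)).succAbove i) (y i)
            ∂(Measure.pi fun i => lam ((0 : Fin (n+1)).succAbove i)) := by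
          have h2 : AEMeasurable (fun y : Fin n → ℝ => ∏ i : Fin n,
              g ((0 : Fin (n+1)).succAbove i) (y i))
              (Measure.pi fun i => lam ((0 : Fin (n+1)).succAbove i)) :=
            (Finset.measurable_prod _ fun i _ =>
              (hg _).comp (measurable_pi_apply i)).aemeasurable
          simpa using lintegral_prod_mul (hg 0).aemeasurable h2
      _ = (∫⁻ t, g 0 t ∂(lam 0)) * ∏ i : Fin n, ∫⁻ t, g ((0 : Fin (n+1)).succAbove i) t
            ∂(lam ((0 : Fin (n+1)).succAbove i)) := by
          rw [ih (fun i => lam ((0 : Fin (n+1)).succAbove i))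
            (fun i => g ((0 : Fin (n+1)).succAbove i)) (fun i => hg _)]
      _ = ∏ i, ∫⁻ t, g i t ∂(lam i) := by
          rw [Fin.prod_univ_succAbove (fun i => ∫⁻ t, g i t ∂(lam i)) 0]

lemma ae_eval {f g : ℝ → ℝ} (h : f =ᵐ[volume] g) (i : Fin d) :
    ∀ᵐ x : Fin d → ℝ ∂volume, f (x i) = g (x i) := by
  have h0 : (volume : Measure ℝ) {t | ¬ f t = g t} = 0 := by
    simpa [Filter.EventuallyEq, ae_iff] using h
  rw [ae_iff]
  have heq : {x : Fin d → ℝ | ¬ f (x i) = g (x i)}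
      = Function.eval i ⁻¹' {t | ¬ f t = g t} := rfl
  rw [heq, volume_pi]
  exact Measure.pi_eval_preimage_null _ h0

/-- Measurable nonneg representative of the densities. -/
noncomputable def pq (p : Fin d → ℝ → ℝ) (hpd : ∀ i, ∫ x : ℝ, p i x = 1)
    (i : Fin d) : ℝ → ℝ :=
  fun t => max ((integrable_p hpd i).aestronglyMeasurable.mk (p i) t) 0

lemma pq_meas (hpd : ∀ i, ∫ x : ℝ, p i x = 1) (i : Fin d) :
    Measurable (pq p hpd i) :=
  ((integrable_p hpd i).aestronglyMeasurable.stronglyMeasurable_mk.measurable).max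
    measurable_const

lemma pq_nonneg (hpd : ∀ i, ∫ x : ℝ, p i x = 1) (i : Fin d) (t : ℝ) :
    0 ≤ pq p hpd i t := le_max_right _ _

lemma pq_ae (hp : ∀ i x, 0 ≤ p i x) (hpd : ∀ i, ∫ x : ℝ, p i x = 1) (i : Fin d) :
    p i =ᵐ[volume] pq p hpd i := by
  filter_upwards [(integrable_p hpd i).aestronglyMeasurable.ae_eq_mk] with t ht
  rw [pq, ← ht, max_eq_left (hp i t)]

lemma pq_ae_pi (hp : ∀ i x, 0 ≤ p i x) (hpd : ∀ i, ∫ x : ℝ, p i x = 1) :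
    ∀ᵐ x : Fin d → ℝ ∂volume, ∀ i, p i (x i) = pq p hpd i (x i) := by
  rw [MeasureTheory.ae_all_iff]
  exact fun i => ae_eval (pq_ae hp hpd i) i

/-- The product density measure is the product of the factor measures,
measurable density version. -/
lemma nu_eq_pm_meas {q : Fin d → ℝ → ℝ} (hq : ∀ i, Measurable (q i))
    (hq0 : ∀ i t, 0 ≤ q i t)
    (hqP : ∀ i, IsProbabilityMeasure (volume.withDensity fun t => ENNReal.ofReal (q i t))) :
    (volume : Measure (Fin d → ℝ)).withDensity
      (fun x => ENNReal.ofReal (∏ i, q i (x i))) = pm q := by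
  classical
  haveI := hqP
  unfold pm
  refine (Measure.pi_eq (μ := fun i => volume.withDensity fun t => ENNReal.ofReal (q i t)) fun S hS => ?_).symm
  rw [withDensity_apply _ (MeasurableSet.univ_pi hS)]
  have hind : (Set.univ.pi S).indicator (fun x : Fin d → ℝ => ENNReal.ofReal (∏ i, q i (x i)))
      = fun x => ∏ i, (S i).indicator (fun t => ENNReal.ofReal (q i t)) (x i) := by
    funext x
    by_cases hx : x ∈ Set.univ.pi S
    · rw [Set.indicator_of_mem hx,
        ENNReal.ofReal_prod_of_nonneg fun i _ => hq0 i (x i)]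
      exact Finset.prod_congr rfl fun i _ =>
        (Set.indicator_of_mem (hx i (Set.mem_univ i))
          (fun t => ENNReal.ofReal (q i t))).symm
    · rw [Set.indicator_of_notMem hx]
      have hex : ∃ i, x i ∉ S i := by
        by_contra hall
        push_neg at hall
        exact hx fun i _ => hall i
      obtain ⟨i, hi⟩ := hex
      exact (Finset.prod_eq_zero (Finset.mem_univ i)
        (Set.indicator_of_notMem hi _)).symm
  rw [← lintegral_indicator (MeasurableSet.univ_pi hS), volume_pi]
  simp only [hind]
  rw [lintegral_pi_prod (fun _ => (volume : Measure ℝ))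
    (fun i => (S i).indicator fun t => ENNReal.ofReal (q i t))
    (fun i => (ENNReal.measurable_ofReal.comp (hq i)).indicator (hS i))]
  exact Finset.prod_congr rfl fun i _ => by
    rw [lintegral_indicator (hS i), withDensity_apply _ (hS i)]

/-- The product density measure is the product of the factor measures. -/
lemma nu_eq_pm (hp : ∀ i x, 0 ≤ p i x) (hpd : ∀ i, ∫ x : ℝ, p i x = 1) :
    (volume : Measure (Fin d → ℝ)).withDensity
      (fun x => ENNReal.ofReal (∏ i, p i (x i))) = pm p := by
  have h1 : (volume : Measure (Fin d → ℝ)).withDensity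
      (fun x => ENNReal.ofReal (∏ i, p i (x i)))
      = (volume : Measure (Fin d → ℝ)).withDensity
        (fun x => ENNReal.ofReal (∏ i, pq p hpd i (x i))) := by
    refine withDensity_congr_ae ?_
    filter_upwards [pq_ae_pi hp hpd] with x hx
    rw [Finset.prod_congr rfl fun i _ => hx i]
  have h2 : pm (pq p hpd) = pm p := by
    unfold pm
    congr 1
    funext i
    exact (withDensity_congr_ae ((pq_ae hp hpd i).mono fun t ht => congrArg ENNReal.ofReal ht)).symm
  have hqP : ∀ i, IsProbabilityMeasure
      (volume.withDensity fun t => ENNReal.ofReal (pq p hpd i t)) := by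
    intro i
    have : (volume.withDensity fun t => ENNReal.ofReal (p i t))
        = volume.withDensity fun t => ENNReal.ofReal (pq p hpd i t) :=
      withDensity_congr_ae ((pq_ae hp hpd i).mono fun t ht => congrArg ENNReal.ofReal ht)
    rw [← this]
    exact prob_factor hp hpd i
  rw [h1, nu_eq_pm_meas (pq_meas hpd) (pq_nonneg hpd) hqP, h2]

/-- a.e.-measurability of the product density. -/
lemma aemeasurable_dens (hp : ∀ i x, 0 ≤ p i x) (hpd : ∀ i, ∫ x : ℝ, p i x = 1) :
    AEMeasurable (fun x : Fin d → ℝ => (∏ i, p i (x i)).toNNReal)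
      (volume : Measure (Fin d → ℝ)) := by
  refine AEMeasurable.congr (f := fun x => (∏ i, pq p hpd i (x i)).toNNReal) ?_ ?_
  · exact (measurable_real_toNNReal.comp <| Finset.measurable_prod _ fun i _ =>
      (pq_meas hpd i).comp (measurable_pi_apply i)).aemeasurable
  · filter_upwards [pq_ae_pi hp hpd] with x hx
    rw [Finset.prod_congr rfl fun i _ => (hx i).symm]

/-- Conversion of weighted integrals to integrals against `pm p`. -/
lemma integral_pm (hp : ∀ i x, 0 ≤ p i x) (hpd : ∀ i, ∫ x : ℝ, p i x = 1)
    (f : (Fin d → ℝ) → ℝ) :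
    ∫ x, f x ∂(pm p) = ∫ x, f x * ∏ i, p i (x i) := by
  rw [← nu_eq_pm hp hpd]
  have : (fun x : Fin d → ℝ => ENNReal.ofReal (∏ i, p i (x i)))
      = fun x => ((∏ i, p i (x i)).toNNReal : ℝ≥0∞) := rfl
  rw [this, integral_withDensity_eq_integral_smul₀ (aemeasurable_dens hp hpd) f]
  refine integral_congr_ae (Filter.Eventually.of_forall fun x => ?_)
  dsimp only
  rw [NNReal.smul_def, smul_eq_mul, Real.coe_toNNReal _
    (Finset.prod_nonneg fun i _ => hp i (x i)), mul_comm]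

lemma mp_fstsnd {α β : Type*} [MeasurableSpace α] [MeasurableSpace β]
    (A : Measure α) (B : Measure β) [IsProbabilityMeasure A] [IsProbabilityMeasure B] :
    MeasurePreserving (Prod.map (Prod.fst : α × β → α) (Prod.snd : α × β → β))
      ((A.prod B).prod (A.prod B)) (A.prod B) :=
  MeasurePreserving.prod
    ⟨measurable_fst, by rw [Measure.map_fst_prod]; simp⟩
    ⟨measurable_snd, by rw [Measure.map_snd_prod]; simp⟩

lemma measurePreserving_mix (hp : ∀ i x, 0 ≤ p i x) (hpd : ∀ i, ∫ x : ℝ, p i x = 1)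
    (s : Finset (Fin d)) :
    MeasurePreserving (fun q : (Fin d → ℝ) × (Fin d → ℝ) => mix s q.1 q.2)
      ((pm p).prod (pm p)) (pm p) := by
  haveI : ∀ i, IsProbabilityMeasure
      (volume.withDensity fun t => ENNReal.ofReal (p i t)) := prob_factor hp hpd
  set μi : Fin d → Measure ℝ :=
    fun i => volume.withDensity fun t => ENNReal.ofReal (p i t) with hμi
  have he := measurePreserving_piEquivPiSubtypeProd μi (· ∈ s)
  have hcomp := (MeasurePreserving.symm _ he).comp ((mp_fstsnd _ _).comp (he.prod he))
  have hpm : pm p = Measure.pi μi := rfl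
  rw [hpm]
  convert hcomp using 1
  funext q
  funext i
  by_cases hi : i ∈ s <;> simp [mix, hi, MeasurableEquiv.piEquivPiSubtypeProd, Equiv.piEquivPiSubtypeProd]

end measure

section analysis

variable {p : Fin d → ℝ → ℝ} {φ : (Fin d → ℝ) → ℝ}

/-- The conditional expectation of `φ` given the coordinates in `s`. -/
noncomputable def G (p : Fin d → ℝ → ℝ) (φ : (Fin d → ℝ) → ℝ)
    (s : Finset (Fin d)) (x : Fin d → ℝ) : ℝ :=
  ∫ y, φ (mix s x y) ∂(pm p)

/-- General integral identity for measure preserving maps. -/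
lemma integral_comp_mp {α β : Type*} [MeasurableSpace α] [MeasurableSpace β]
    {T : α → β} {μ : Measure α} {ν : Measure β} (hT : MeasurePreserving T μ ν)
    {f : β → ℝ} (hf : AEStronglyMeasurable f ν) :
    ∫ a, f (T a) ∂μ = ∫ b, f b ∂ν := by
  rw [← hT.map_eq] at hf ⊢
  exact (integral_map hT.aemeasurable hf).symm

lemma mul_L2_integrable {α : Type*} [MeasurableSpace α] {μ : Measure α}
    {f g : α → ℝ} (hf : MemLp f 2 μ) (hg : MemLp g 2 μ) :
    Integrable (fun x => f x * g x) μ := by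
  have h : (1 : ℝ≥0∞) / 1 = 1 / 2 + 1 / 2 := by
    rw [one_div_one, one_div, ENNReal.inv_two_add_inv_two]
  haveI : ENNReal.HolderTriple 2 2 1 := ⟨by rw [inv_one, ENNReal.inv_two_add_inv_two]⟩
  have := hg.smul (r := 1) hf
  rw [memLp_one_iff_integrable] at this
  exact this

lemma memLp_comp_mix (hp : ∀ i x, 0 ≤ p i x) (hpd : ∀ i, ∫ x : ℝ, p i x = 1) (hφ : MemLp φ 2 (pm p)) (s : Finset (Fin d)) :
    MemLp (fun q : (Fin d → ℝ) × (Fin d → ℝ) => φ (mix s q.1 q.2)) 2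
      ((pm p).prod (pm p)) := by
  haveI := prob_pm hp hpd
  exact hφ.comp_measurePreserving (measurePreserving_mix hp hpd s)

lemma integrable_comp_mix (hp : ∀ i x, 0 ≤ p i x) (hpd : ∀ i, ∫ x : ℝ, p i x = 1) {f : (Fin d → ℝ) → ℝ} (hf : Integrable f (pm p))
    (s : Finset (Fin d)) :
    Integrable (fun q : (Fin d → ℝ) × (Fin d → ℝ) => f (mix s q.1 q.2))
      ((pm p).prod (pm p)) := by
  haveI := prob_pm hp hpd
  have := (memLp_one_iff_integrable.mpr hf).comp_measurePreserving
    (measurePreserving_mix hp hpd s)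
  exact memLp_one_iff_integrable.mp this

lemma sect_int (hp : ∀ i x, 0 ≤ p i x) (hpd : ∀ i, ∫ x : ℝ, p i x = 1) {f : (Fin d → ℝ) → ℝ} (hf : Integrable f (pm p)) (v : Finset (Fin d)) :
    ∀ᵐ x ∂(pm p), Integrable (fun y => f (mix v x y)) (pm p) := by
  haveI := prob_pm hp hpd
  exact (integrable_comp_mix hp hpd hf v).prod_right_ae

lemma integral_mix (hp : ∀ i x, 0 ≤ p i x) (hpd : ∀ i, ∫ x : ℝ, p i x = 1) {f : (Fin d → ℝ) → ℝ} (hf : Integrable f (pm p)) (s : Finset (Fin d)) :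
    ∫ x, f x ∂(pm p) = ∫ x, ∫ y, f (mix s x y) ∂(pm p) ∂(pm p) := by
  haveI := prob_pm hp hpd
  rw [integral_integral (integrable_comp_mix hp hpd hf s)]
  exact (integral_comp_mp (measurePreserving_mix hp hpd s) hf.aestronglyMeasurable).symm

lemma G_stmt (hp : ∀ i x, 0 ≤ p i x) (hpd : ∀ i, ∫ x : ℝ, p i x = 1) (s : Finset (Fin d)) (x : Fin d → ℝ) :
    (∫ y : Fin d → ℝ, φ (fun i => if i ∈ s then x i else y i) * ∏ i, p i (y i)) = G p φ s x :=
  (integral_pm hp hpd fun y => φ (mix s x y)).symm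

lemma G_mix {s t : Finset (Fin d)} (h : s ⊆ t) (x y : Fin d → ℝ) :
    G p φ s (mix t x y) = G p φ s x := by
  unfold G
  simp only [mix_mix s t h]

lemma memLp_G (hp : ∀ i x, 0 ≤ p i x) (hpd : ∀ i, ∫ x : ℝ, p i x = 1) (hφ : MemLp φ 2 (pm p)) (s : Finset (Fin d)) : MemLp (G p φ s) 2 (pm p) := by
  haveI := prob_pm hp hpd
  have h2 := memLp_comp_mix hp hpd hφ s
  have hASM : AEStronglyMeasurable (G p φ s) (pm p) :=
    h2.aestronglyMeasurable.integral_prod_right'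
  have hsq : Integrable (fun q : (Fin d → ℝ) × (Fin d → ℝ) => φ (mix s q.1 q.2) ^ 2)
      ((pm p).prod (pm p)) := (memLp_two_iff_integrable_sq h2.aestronglyMeasurable).mp h2
  have hbound : ∀ᵐ x ∂(pm p), (G p φ s x) ^ 2 ≤ ∫ y, φ (mix s x y) ^ 2 ∂(pm p) := by
    filter_upwards [hsq.prod_right_ae, h2.aestronglyMeasurable.prodMk_left] with x h1 h2x
    have hmem : MemLp (fun y => φ (mix s x y)) 2 (pm p) :=
      (memLp_two_iff_integrable_sq h2x).mpr h1
    have hv := ProbabilityTheory.variance_nonneg (fun y => φ (mix s x y)) (pm p)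
    rw [ProbabilityTheory.variance_eq_sub hmem] at hv
    simp only [Pi.pow_apply] at hv
    have : G p φ s x = ∫ y, φ (mix s x y) ∂(pm p) := rfl
    rw [this]
    linarith
  have hH : Integrable (fun x => ∫ y, φ (mix s x y) ^ 2 ∂(pm p)) (pm p) :=
    hsq.integral_prod_left
  have hGsq : Integrable (fun x => (G p φ s x) ^ 2) (pm p) := by
    refine Integrable.mono' hH (hASM.pow 2) ?_
    filter_upwards [hbound] with x hx
    rw [Real.norm_eq_abs, abs_of_nonneg (sq_nonneg _)]
    exact hx
  exact (memLp_two_iff_integrable_sq hASM).mpr hGsq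

lemma ssubsets_eq (u : Finset (Fin d)) : u.ssubsets = u.powerset.erase u := rfl

lemma anova_rec (hp : ∀ i x, 0 ≤ p i x) (hpd : ∀ i, ∫ x : ℝ, p i x = 1) (u : Finset (Fin d)) (x : Fin d → ℝ) :
    anova p φ u x = G p φ u x - ∑ v ∈ u.ssubsets, anova p φ v x := by
  rw [anova]
  dsimp only
  rw [Finset.sum_attach u.ssubsets (fun v => anova p φ v x), G_stmt hp hpd u x]

lemma sum_powerset_anova (hp : ∀ i x, 0 ≤ p i x) (hpd : ∀ i, ∫ x : ℝ, p i x = 1) (u : Finset (Fin d)) (x : Fin d → ℝ) :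
    ∑ v ∈ u.powerset, anova p φ v x = G p φ u x := by
  rw [← Finset.insert_erase (Finset.mem_powerset_self u),
    Finset.sum_insert (Finset.notMem_erase _ _), anova_rec hp hpd u x, ssubsets_eq]
  ring

lemma anova_mix (hp : ∀ i x, 0 ≤ p i x) (hpd : ∀ i, ∫ x : ℝ, p i x = 1) (u : Finset (Fin d)) :
    ∀ t : Finset (Fin d), u ⊆ t → ∀ x y, anova p φ u (mix t x y) = anova p φ u x := by
  induction u using Finset.strongInduction with
  | _ u ih =>
    intro t hut x y
    rw [anova_rec hp hpd, anova_rec hp hpd, G_mix hut]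
    congr 1
    refine Finset.sum_congr rfl fun w hw => ?_
    exact ih w (Finset.mem_ssubsets.mp hw) t
      ((Finset.mem_ssubsets.mp hw).subset.trans hut) x y

lemma memLp_anova (hp : ∀ i x, 0 ≤ p i x) (hpd : ∀ i, ∫ x : ℝ, p i x = 1) (hφ : MemLp φ 2 (pm p)) (u : Finset (Fin d)) : MemLp (anova p φ u) 2 (pm p) := by
  induction u using Finset.strongInduction with
  | _ u ih =>
    have heq : anova p φ u = G p φ u - fun x => ∑ v ∈ u.ssubsets, anova p φ v x := by
      funext x
      simp only [Pi.sub_apply]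
      exact anova_rec hp hpd u x
    rw [heq]
    exact (memLp_G hp hpd hφ u).sub
      (memLp_finset_sum _ fun w hw => ih w (Finset.mem_ssubsets.mp hw))

lemma Pv_G (hp : ∀ i x, 0 ≤ p i x) (hpd : ∀ i, ∫ x : ℝ, p i x = 1) (hφ : MemLp φ 2 (pm p)) (v a : Finset (Fin d)) :
    ∀ᵐ x ∂(pm p), (∫ y, G p φ a (mix v x y) ∂(pm p)) = G p φ (a ∩ v) x := by
  haveI := prob_pm hp hpd
  have hφ1 : Integrable φ (pm p) := hφ.integrable one_le_two
  filter_upwards [sect_int hp hpd hφ1 (a ∩ v)] with x hx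
  have h1 : ∀ y : Fin d → ℝ, G p φ a (mix v x y)
      = ∫ z, φ (mix (a ∩ v) x (mix (a \ v) y z)) ∂(pm p) := by
    intro y
    unfold G
    simp only [mix_assoc a v]
  calc ∫ y, G p φ a (mix v x y) ∂(pm p)
      = ∫ y, ∫ z, φ (mix (a ∩ v) x (mix (a \ v) y z)) ∂(pm p) ∂(pm p) := by
        simp only [h1]
    _ = ∫ q : (Fin d → ℝ) × (Fin d → ℝ),
          φ (mix (a ∩ v) x (mix (a \ v) q.1 q.2)) ∂((pm p).prod (pm p)) :=
        integral_integral (integrable_comp_mix hp hpd hx (a \ v))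
    _ = ∫ w, φ (mix (a ∩ v) x w) ∂(pm p) :=
        integral_comp_mp (measurePreserving_mix hp hpd (a \ v)) hx.aestronglyMeasurable
    _ = G p φ (a ∩ v) x := rfl

lemma Pv_anova (hp : ∀ i x, 0 ≤ p i x) (hpd : ∀ i, ∫ x : ℝ, p i x = 1) (hφ : MemLp φ 2 (pm p)) (u : Finset (Fin d)) :
    ∀ v : Finset (Fin d), ∀ᵐ x ∂(pm p),
      (∫ y, anova p φ u (mix v x y) ∂(pm p))
        = if u ⊆ v then anova p φ u x else 0 := by
  induction u using Finset.strongInduction with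
  | _ u ih =>
    intro v
    haveI := prob_pm hp hpd
    have hGa : Integrable (G p φ u) (pm p) :=
      (memLp_G hp hpd hφ u).integrable one_le_two
    have hIH : ∀ᵐ x ∂(pm p), ∀ w ∈ u.ssubsets,
        (∫ y, anova p φ w (mix v x y) ∂(pm p))
          = if w ⊆ v then anova p φ w x else 0 := by
      rw [Filter.eventually_all_finset]
      intro w hw
      exact ih w (Finset.mem_ssubsets.mp hw) v
    have hsecA : ∀ᵐ x ∂(pm p), ∀ w ∈ u.ssubsets,
        Integrable (fun y => anova p φ w (mix v x y)) (pm p) := by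
      rw [Filter.eventually_all_finset]
      intro w hw
      exact sect_int hp hpd
        ((memLp_anova hp hpd hφ w).integrable one_le_two) v
    filter_upwards [sect_int hp hpd hGa v, hIH, hsecA, Pv_G hp hpd hφ v u]
      with x hxG hxIH hxint hxPvG
    have hstep : (∫ y, anova p φ u (mix v x y) ∂(pm p))
        = G p φ (u ∩ v) x - ∑ w ∈ u.ssubsets, (if w ⊆ v then anova p φ w x else 0) := by
      calc ∫ y, anova p φ u (mix v x y) ∂(pm p)
          = ∫ y, (G p φ u (mix v x y)
              - ∑ w ∈ u.ssubsets, anova p φ w (mix v x y)) ∂(pm p) := by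
            refine integral_congr_ae (Filter.Eventually.of_forall fun y => ?_)
            dsimp only
            rw [anova_rec hp hpd]
        _ = (∫ y, G p φ u (mix v x y) ∂(pm p))
              - ∫ y, ∑ w ∈ u.ssubsets, anova p φ w (mix v x y) ∂(pm p) :=
            integral_sub hxG (integrable_finset_sum _ fun w hw => hxint w hw)
        _ = (∫ y, G p φ u (mix v x y) ∂(pm p))
              - ∑ w ∈ u.ssubsets, ∫ y, anova p φ w (mix v x y) ∂(pm p) := by
            rw [integral_finset_sum _ fun w hw => hxint w hw]
        _ = G p φ (u ∩ v) x
              - ∑ w ∈ u.ssubsets, (if w ⊆ v then anova p φ w x else 0) := by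
            rw [hxPvG]
            congr 1
            exact Finset.sum_congr rfl fun w hw => hxIH w hw
    rw [hstep]
    by_cases huv : u ⊆ v
    · rw [if_pos huv, Finset.inter_eq_left.mpr huv]
      have : ∑ w ∈ u.ssubsets, (if w ⊆ v then anova p φ w x else 0)
          = ∑ w ∈ u.ssubsets, anova p φ w x :=
        Finset.sum_congr rfl fun w hw =>
          if_pos ((Finset.mem_ssubsets.mp hw).subset.trans huv)
      rw [this, ← anova_rec hp hpd]
    · rw [if_neg huv]
      have hfilter : u.ssubsets.filter (fun w => w ⊆ v) = (u ∩ v).powerset := by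
        ext w
        simp only [Finset.mem_filter, Finset.mem_ssubsets, Finset.mem_powerset]
        constructor
        · rintro ⟨h1, h2⟩
          exact Finset.subset_inter h1.subset h2
        · intro h
          have h2 : w ⊆ v := h.trans Finset.inter_subset_right
          have h1 : w ⊂ u := lt_of_le_of_lt h (lt_of_le_of_ne Finset.inter_subset_left
            fun he => huv (Finset.inter_eq_left.mp he))
          exact ⟨h1, h2⟩
      rw [← Finset.sum_filter, hfilter, sum_powerset_anova hp hpd, sub_self]

lemma proj_inner (hp : ∀ i x, 0 ≤ p i x) (hpd : ∀ i, ∫ x : ℝ, p i x = 1)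
    (v : Finset (Fin d)) {f h : (Fin d → ℝ) → ℝ}
    (hf : MemLp f 2 (pm p)) (hh : MemLp h 2 (pm p))
    (hmix : ∀ x y, h (mix v x y) = h x) :
    ∫ x, f x * h x ∂(pm p)
      = ∫ x, (∫ y, f (mix v x y) ∂(pm p)) * h x ∂(pm p) := by
  haveI := prob_pm hp hpd
  have hfh : Integrable (fun x => f x * h x) (pm p) := mul_L2_integrable hf hh
  rw [integral_mix hp hpd hfh v]
  refine integral_congr_ae (Filter.Eventually.of_forall fun x => ?_)
  dsimp only
  calc ∫ y, f (mix v x y) * h (mix v x y) ∂(pm p)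
      = ∫ y, f (mix v x y) * h x ∂(pm p) := by
        refine integral_congr_ae (Filter.Eventually.of_forall fun y => ?_)
        dsimp only
        rw [hmix]
    _ = (∫ y, f (mix v x y) ∂(pm p)) * h x := by rw [integral_mul_const]

lemma orth (hp : ∀ i x, 0 ≤ p i x) (hpd : ∀ i, ∫ x : ℝ, p i x = 1)
    (hφ : MemLp φ 2 (pm p)) {a b : Finset (Fin d)} (hab : ¬ a ⊆ b) :
    ∫ x, anova p φ a x * anova p φ b x ∂(pm p) = 0 := by
  haveI := prob_pm hp hpd
  rw [proj_inner hp hpd b (memLp_anova hp hpd hφ a) (memLp_anova hp hpd hφ b)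
    (fun x y => anova_mix hp hpd b b (Finset.Subset.refl b) x y)]
  have hz : ∀ᵐ x ∂(pm p),
      (∫ y, anova p φ a (mix b x y) ∂(pm p)) * anova p φ b x = 0 := by
    filter_upwards [Pv_anova hp hpd hφ a b] with x hx
    rw [hx, if_neg hab, zero_mul]
  rw [integral_congr_ae hz, integral_zero]

lemma orth' (hp : ∀ i x, 0 ≤ p i x) (hpd : ∀ i, ∫ x : ℝ, p i x = 1)
    (hφ : MemLp φ 2 (pm p)) {a b : Finset (Fin d)} (hab : a ≠ b) :
    ∫ x, anova p φ a x * anova p φ b x ∂(pm p) = 0 := by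
  by_cases h : a ⊆ b
  · have h2 : ¬ b ⊆ a := fun h' => hab (Finset.Subset.antisymm h h')
    have h3 := orth hp hpd hφ (a := b) (b := a) h2
    rw [← h3]
    exact integral_congr_ae (Filter.Eventually.of_forall fun x => mul_comm _ _)
  · exact orth hp hpd hφ h

lemma sum_sq (hp : ∀ i x, 0 ≤ p i x) (hpd : ∀ i, ∫ x : ℝ, p i x = 1)
    (hφ : MemLp φ 2 (pm p)) (u : Finset (Fin d)) :
    ∫ x, (G p φ u x) ^ 2 ∂(pm p)
      = ∑ v ∈ u.powerset, ∫ x, anova p φ v x ^ 2 ∂(pm p) := by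
  haveI := prob_pm hp hpd
  have hint : ∀ a b : Finset (Fin d),
      Integrable (fun x => anova p φ a x * anova p φ b x) (pm p) :=
    fun a b => mul_L2_integrable (memLp_anova hp hpd hφ a) (memLp_anova hp hpd hφ b)
  calc ∫ x, (G p φ u x) ^ 2 ∂(pm p)
      = ∫ x, ∑ a ∈ u.powerset, ∑ b ∈ u.powerset,
          anova p φ a x * anova p φ b x ∂(pm p) := by
        refine integral_congr_ae (Filter.Eventually.of_forall fun x => ?_)
        dsimp only
        rw [pow_two, ← sum_powerset_anova hp hpd u x, Finset.sum_mul_sum]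
    _ = ∑ a ∈ u.powerset, ∑ b ∈ u.powerset,
          ∫ x, anova p φ a x * anova p φ b x ∂(pm p) := by
        rw [integral_finset_sum _ fun a _ =>
          integrable_finset_sum _ fun b _ => hint a b]
        exact Finset.sum_congr rfl fun a _ =>
          integral_finset_sum _ fun b _ => hint a b
    _ = ∑ a ∈ u.powerset, ∫ x, anova p φ a x ^ 2 ∂(pm p) := by
        refine Finset.sum_congr rfl fun a ha => ?_
        rw [Finset.sum_eq_single_of_mem a ha
          (fun b _ hb => orth' hp hpd hφ (Ne.symm hb))]
        refine integral_congr_ae (Filter.Eventually.of_forall fun x => ?_)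
        dsimp only
        rw [pow_two]

lemma Gsq_eq (hp : ∀ i x, 0 ≤ p i x) (hpd : ∀ i, ∫ x : ℝ, p i x = 1)
    (hφ : MemLp φ 2 (pm p)) (u : Finset (Fin d)) :
    ∫ x, φ x * G p φ u x ∂(pm p) = ∫ x, (G p φ u x) ^ 2 ∂(pm p) := by
  rw [proj_inner hp hpd u hφ (memLp_G hp hpd hφ u)
    (fun x y => G_mix (Finset.Subset.refl u) x y)]
  refine integral_congr_ae (Filter.Eventually.of_forall fun x => ?_)
  dsimp only
  rw [pow_two]
  rfl

end analysis

end WangFang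

/-- The cumulated ANOVA variance identity of Wang and Fang (2003):
`Γ_u = ∑_{v ⊆ u} σ_v²` (with `σ_∅² = 0`, so the sum runs over nonempty `v ⊆ u`) = ∬ φ(x) φ(x_u, y_{−u}) p(x) p(y) dx dy − (∫ φ p)²`. -/
theorem cumulated_anova_variance
    (d : ℕ) (p : Fin d → ℝ → ℝ) (φ : (Fin d → ℝ) → ℝ)
    (hp : ∀ i x, 0 ≤ p i x) (hpdens : ∀ i, ∫ x : ℝ, p i x = 1)
    (hφ : MeasureTheory.MemLp φ 2
      (MeasureTheory.volume.withDensity fun x => ENNReal.ofReal (∏ i, p i (x i))))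
    (u : Finset (Fin d)) (hu : u.Nonempty) :
    ∑ v ∈ u.powerset.erase ∅,
        (∫ x : Fin d → ℝ, anova p φ v x ^ 2 * ∏ i, p i (x i))
      = (∫ x : Fin d → ℝ, ∫ y : Fin d → ℝ,
            φ x * φ (fun i => if i ∈ u then x i else y i) *
              ((∏ i, p i (x i)) * ∏ i, p i (y i))) -
        (∫ x : Fin d → ℝ, φ x * ∏ i, p i (x i)) ^ 2 := by
  classical
  haveI := WangFang.prob_pm hp hpdens
  rw [WangFang.nu_eq_pm hp hpdens] at hφ
  have hLHS : ∑ v ∈ u.powerset.erase ∅,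
      (∫ x : Fin d → ℝ, anova p φ v x ^ 2 * ∏ i, p i (x i))
      = ∑ v ∈ u.powerset.erase ∅, ∫ x, anova p φ v x ^ 2 ∂(WangFang.pm p) :=
    Finset.sum_congr rfl fun v _ =>
      (WangFang.integral_pm hp hpdens fun x => anova p φ v x ^ 2).symm
  have hempty : anova p φ (∅ : Finset (Fin d)) = fun _ => ∫ z, φ z ∂(WangFang.pm p) := by
    funext x
    rw [WangFang.anova_rec hp hpdens ∅ x, WangFang.ssubsets_eq,
      Finset.powerset_empty, Finset.erase_singleton, Finset.sum_empty, sub_zero]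
    unfold WangFang.G
    simp only [WangFang.mix_empty]
  have hc2 : ∫ x, anova p φ (∅ : Finset (Fin d)) x ^ 2 ∂(WangFang.pm p)
      = (∫ z, φ z ∂(WangFang.pm p)) ^ 2 := by
    rw [hempty]
    simp [integral_const, measure_univ]
  have hinner : ∀ x : Fin d → ℝ,
      (∫ y : Fin d → ℝ, φ x * φ (fun i => if i ∈ u then x i else y i) *
          ((∏ i, p i (x i)) * ∏ i, p i (y i)))
      = (φ x * WangFang.G p φ u x) * ∏ i, p i (x i) := by
    intro x
    have h1 : ∀ y : Fin d → ℝ,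
        φ x * φ (WangFang.mix u x y) * ((∏ i, p i (x i)) * ∏ i, p i (y i))
        = (φ x * ∏ i, p i (x i)) * (φ (WangFang.mix u x y) * ∏ i, p i (y i)) :=
      fun y => by ring
    rw [show (fun y : Fin d → ℝ => φ x * φ (fun i => if i ∈ u then x i else y i) *
        ((∏ i, p i (x i)) * ∏ i, p i (y i)))
        = fun y : Fin d → ℝ => (φ x * ∏ i, p i (x i)) *
            (φ (WangFang.mix u x y) * ∏ i, p i (y i)) from funext h1]
    rw [MeasureTheory.integral_const_mul]
    rw [show (∫ y : Fin d → ℝ, φ (WangFang.mix u x y) * ∏ i, p i (y i))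
        = WangFang.G p φ u x from
      (WangFang.integral_pm hp hpdens fun y => φ (WangFang.mix u x y)).symm]
    ring
  have hR1 : (∫ x : Fin d → ℝ, ∫ y : Fin d → ℝ,
        φ x * φ (fun i => if i ∈ u then x i else y i) *
          ((∏ i, p i (x i)) * ∏ i, p i (y i)))
      = ∫ x, φ x * WangFang.G p φ u x ∂(WangFang.pm p) := by
    calc (∫ x : Fin d → ℝ, ∫ y : Fin d → ℝ,
        φ x * φ (fun i => if i ∈ u then x i else y i) *
          ((∏ i, p i (x i)) * ∏ i, p i (y i)))
        = ∫ x : Fin d → ℝ, (φ x * WangFang.G p φ u x) * ∏ i, p i (x i) :=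
          congrArg (MeasureTheory.integral volume) (funext hinner)
      _ = ∫ x, φ x * WangFang.G p φ u x ∂(WangFang.pm p) :=
          (WangFang.integral_pm hp hpdens fun x => φ x * WangFang.G p φ u x).symm
  have hR2 : (∫ x : Fin d → ℝ, φ x * ∏ i, p i (x i)) = ∫ z, φ z ∂(WangFang.pm p) :=
    (WangFang.integral_pm hp hpdens φ).symm
  rw [hLHS, Finset.sum_erase_eq_sub (Finset.empty_mem_powerset u), hc2,
    ← WangFang.sum_sq hp hpdens hφ u, hR1, WangFang.Gsq_eq hp hpdens hφ u, hR2]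
end

section
/- The conditional variance of the partial importance sampling estimator with proposal q̂ on coordinates u decomposes as Var = ∫ [ν(x)² + I²(q̆(x_u) − q̂(x_u))²] p(x_{−u})/q̂(x_u) dx, where ν(x) = φ(x)p_u(x_u) − ∫φ(x)p(x)dx_{−u}, q̆(x_u) = ∫ φ(x)p(x)dx_{−u} / I is the marginalized optimal proposal, and I = ∫φp. -/
open MeasureTheory

/-- Key variance decomposition for partial importance sampling (Theorem 1):
with `ν(x) = φ(x) p_u(x_u) − ∫ φ(x) p(x) dx_{−u}` and marginalized optimal
proposal `q̆(x_u) = ∫ φ(x) p(x) dx_{−u} / I`, the conditional variance of the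
estimator `φ(X) p_u(X_u)/q̂(X_u)` satisfies
`Var = ∫ [ν² + I²(q̆ − q̂)²] p_{−u}/q̂`. -/
theorem partial_is_variance_decomposition
    (m k : ℕ) (pu : (Fin m → ℝ) → ℝ) (pmu : (Fin k → ℝ) → ℝ)
    (qhat qbreve : (Fin m → ℝ) → ℝ) (φ ν : (Fin m → ℝ) × (Fin k → ℝ) → ℝ)
    (I : ℝ)
    (hφ : ∀ z, 0 ≤ φ z)
    (hpu : ∀ x, 0 ≤ pu x) (hpmu : ∀ y, 0 ≤ pmu y)
    (hpudens : ∫ x, pu x = 1) (hpmudens : ∫ y, pmu y = 1)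
    (hqhat : ∀ x, 0 ≤ qhat x) (hqdens : ∫ x, qhat x = 1)
    (hI : I = ∫ x, ∫ y, φ (x, y) * (pu x * pmu y)) (hIpos : 0 < I)
    (hqbreve : ∀ x, qbreve x = pu x * (∫ y, φ (x, y) * pmu y) / I)
    (hν : ∀ x y, ν (x, y) = φ (x, y) * pu x - pu x * ∫ z, φ (x, z) * pmu z)
    (hsupp : ∀ x, 0 < qbreve x → 0 < qhat x)
    (hint2 : Integrable (fun z : (Fin m → ℝ) × (Fin k → ℝ) =>
      (φ z * pu z.1) ^ 2 * pmu z.2 / qhat z.1)) :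
    ∫ x, ∫ y, (φ (x, y) * pu x / qhat x - I) ^ 2 * (qhat x * pmu y) =
      ∫ x, ∫ y,
        (ν (x, y) ^ 2 + I ^ 2 * (qbreve x - qhat x) ^ 2) * pmu y / qhat x := by
  -- pmu is integrable since its integral is 1 ≠ 0
  have hpmu_int : Integrable pmu := by
    by_contra h
    rw [integral_undef h] at hpmudens
    norm_num at hpmudens
  have hIne : I ≠ 0 := ne_of_gt hIpos
  -- a.e. in x, the squared integrand is integrable in y
  have hint2' : Integrable (fun z : (Fin m → ℝ) × (Fin k → ℝ) =>
      (φ z * pu z.1) ^ 2 * pmu z.2 / qhat z.1) (volume.prod volume) := by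
    rwa [← Measure.volume_eq_prod]
  have hae := hint2'.prod_right_ae
  refine integral_congr_ae ?_
  filter_upwards [hae] with x hx
  by_cases hq0 : qhat x = 0
  · simp [hq0]
  have hqpos : 0 < qhat x := lt_of_le_of_ne (hqhat x) (Ne.symm hq0)
  by_cases hp0 : pu x = 0
  · -- pu x = 0 : both sides are I^2 * qhat x
    have hL : ∀ y, (φ (x, y) * pu x / qhat x - I) ^ 2 * (qhat x * pmu y)
        = (I ^ 2 * qhat x) * pmu y := by
      intro y; rw [hp0]; ring
    have hR : ∀ y, (ν (x, y) ^ 2 + I ^ 2 * (qbreve x - qhat x) ^ 2) * pmu y / qhat x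
        = (I ^ 2 * qhat x) * pmu y := by
      intro y
      rw [hν x y, hqbreve x, hp0]
      field_simp
      ring
    rw [integral_congr_ae (Filter.Eventually.of_forall hL), integral_congr_ae (Filter.Eventually.of_forall hR)]
  have hppos : 0 < pu x := lt_of_le_of_ne (hpu x) (Ne.symm hp0)
  set p := pu x with hp
  set q := qhat x with hqdef
  -- integrability of (φ(x,·)*p)^2 * pmu
  have h2 : Integrable (fun y => (φ (x, y) * p) ^ 2 * pmu y) := by
    have := hx.mul_const q
    refine this.congr (Filter.Eventually.of_forall fun y => ?_)
    field_simp
  -- integrability of φ(x,·)^2 * pmu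
  have hφ2 : Integrable (fun y => φ (x, y) ^ 2 * pmu y) := by
    have := h2.div_const (p ^ 2)
    refine this.congr (Filter.Eventually.of_forall fun y => ?_)
    field_simp
  -- measurability of φ(x,·) * pmu
  have hms : AEStronglyMeasurable (fun y => φ (x, y) * pmu y) volume := by
    have h1 := hφ2.aestronglyMeasurable
    have h2m := hpmu_int.aestronglyMeasurable
    have h3 : AEStronglyMeasurable (fun y => Real.sqrt (φ (x, y) ^ 2 * pmu y * pmu y))
        volume := Real.continuous_sqrt.comp_aestronglyMeasurable (h1.mul h2m)
    refine h3.congr (Filter.Eventually.of_forall fun y => ?_)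
    show Real.sqrt (φ (x, y) ^ 2 * pmu y * pmu y) = φ (x, y) * pmu y
    have hr : φ (x, y) ^ 2 * pmu y * pmu y = (φ (x, y) * pmu y) ^ 2 := by ring
    rw [hr, Real.sqrt_sq (mul_nonneg (hφ (x, y)) (hpmu y))]
  -- integrability of φ(x,·) * pmu
  have hφ1 : Integrable (fun y => φ (x, y) * pmu y) := by
    refine Integrable.mono' ((hφ2.add hpmu_int).div_const 2) hms
      (Filter.Eventually.of_forall fun y => ?_)
    have h1 := hφ (x, y)
    have h2 := hpmu y
    simp only [Pi.add_apply]
    rw [Real.norm_eq_abs, abs_of_nonneg (mul_nonneg h1 h2)]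
    nlinarith [mul_nonneg (sq_nonneg (φ (x, y) - 1)) h2]
  set c := ∫ z, φ (x, z) * pmu z with hc
  set B := ∫ y, φ (x, y) ^ 2 * pmu y with hB
  -- compute left inner integral
  have hL : ∫ y, (φ (x, y) * p / q - I) ^ 2 * (q * pmu y)
      = (p ^ 2 / q) * B + (-(2 * I * p)) * c + (I ^ 2 * q) := by
    have heq : ∀ y, (φ (x, y) * p / q - I) ^ 2 * (q * pmu y)
        = (p ^ 2 / q) * (φ (x, y) ^ 2 * pmu y) + (-(2 * I * p)) * (φ (x, y) * pmu y)
          + (I ^ 2 * q) * pmu y := by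
      intro y; field_simp; ring
    rw [integral_congr_ae (Filter.Eventually.of_forall heq)]
    have hA : Integrable (fun y => p ^ 2 / q * (φ (x, y) ^ 2 * pmu y)) := hφ2.const_mul _
    have hBint : Integrable (fun y => -(2 * I * p) * (φ (x, y) * pmu y)) := hφ1.const_mul _
    have hAB : Integrable (fun y => p ^ 2 / q * (φ (x, y) ^ 2 * pmu y)
        + -(2 * I * p) * (φ (x, y) * pmu y)) := hA.add hBint
    have hC : Integrable (fun y => (I ^ 2 * q) * pmu y) := hpmu_int.const_mul _
    rw [integral_add hAB hC, integral_add hA hBint,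
      integral_const_mul, integral_const_mul, integral_const_mul, hpmudens]
    ring
  -- compute right inner integral
  have hR : ∫ y, (ν (x, y) ^ 2 + I ^ 2 * (qbreve x - q) ^ 2) * pmu y / q
      = (p ^ 2 / q) * B + (-(2 * p ^ 2 * c / q)) * c
        + (((p * c) ^ 2 + (p * c - I * q) ^ 2) / q) := by
    have heq : ∀ y, (ν (x, y) ^ 2 + I ^ 2 * (qbreve x - q) ^ 2) * pmu y / q
        = (p ^ 2 / q) * (φ (x, y) ^ 2 * pmu y) + (-(2 * p ^ 2 * c / q)) * (φ (x, y) * pmu y)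
          + (((p * c) ^ 2 + (p * c - I * q) ^ 2) / q) * pmu y := by
      intro y
      rw [hν x y, hqbreve x, ← hc, ← hp]
      field_simp
      ring
    rw [integral_congr_ae (Filter.Eventually.of_forall heq)]
    have hA : Integrable (fun y => p ^ 2 / q * (φ (x, y) ^ 2 * pmu y)) := hφ2.const_mul _
    have hBint : Integrable (fun y => -(2 * p ^ 2 * c / q) * (φ (x, y) * pmu y)) := hφ1.const_mul _
    have hAB : Integrable (fun y => p ^ 2 / q * (φ (x, y) ^ 2 * pmu y)
        + -(2 * p ^ 2 * c / q) * (φ (x, y) * pmu y)) := hA.add hBint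
    have hC : Integrable (fun y => (((p * c) ^ 2 + (p * c - I * q) ^ 2) / q) * pmu y) :=
      hpmu_int.const_mul _
    rw [integral_add hAB hC, integral_add hA hBint,
      integral_const_mul, integral_const_mul, integral_const_mul, hpmudens]
    ring
  rw [hL, hR]
  field_simp
  ring
end
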